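/- For every d ≥ 2 and every ρ with 1 ≤ ρ ≤ d−1, the hyper-simplex Δ(d,ρ) = conv{v ∈ {0,1}^d : Σ_{i=1}^d v_i = ρ} satisfies h(G(Δ(d,ρ))) ≥ 1. -/

import Mathlib

open scoped Classical

noncomputable section

/-- The number of edges of `G` leaving the set `S`, counted as ordered pairs
`(u, v)` with `u ∈ S`, `v ∉ S` and `u ~ v` (each cut edge is counted once). -/
def cutCard {V : Type*} [Fintype V] (G : SimpleGraph V) (S : Set V) : ℕ :=
  {p : V × V | p.1 ∈ S ∧ p.2 ∉ S ∧ G.Adj p.1 p.2}.ncard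

/-- The edge expansion `h(G)` of a finite graph: the infimum of `|δ(S)|/|S|`
over all nonempty `S` with `|S| ≤ |V|/2`. -/
noncomputable def edgeExpansion {V : Type*} [Fintype V] (G : SimpleGraph V) : ℝ :=
  sInf { r : ℝ | ∃ S : Set V, S.Nonempty ∧ 2 * S.ncard ≤ Fintype.card V ∧
    r = (cutCard G S : ℝ) / (S.ncard : ℝ) }
/-- All points of `X` are 0/1-vectors. -/
def IsZeroOne {ι : Type*} (X : Finset (ι → ℝ)) : Prop :=
  ∀ x ∈ X, ∀ i, x i = 0 ∨ x i = 1

/-- Two vertices `u v` of the 0/1-polytope `P = conv X` are adjacent iff they are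
distinct and there is a linear functional whose maximum over `P` is attained
exactly on the segment `[u, v]`. -/
def PolytopeAdj {ι : Type*} [Fintype ι] (X : Finset (ι → ℝ)) (u v : ι → ℝ) : Prop :=
  u ∈ X ∧ v ∈ X ∧ u ≠ v ∧ ∃ (f : (ι → ℝ) →ₗ[ℝ] ℝ) (c : ℝ),
    (∀ x ∈ convexHull ℝ (X : Set (ι → ℝ)), f x ≤ c) ∧
    {x ∈ convexHull ℝ (X : Set (ι → ℝ)) | f x = c} = segment ℝ u v

/-- The graph `G(P)` of the 0/1-polytope `P = conv X`, on the vertex set `X`. -/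
def polytopeGraph {ι : Type*} [Fintype ι] (X : Finset (ι → ℝ)) :
    SimpleGraph {x // x ∈ X} where
  Adj u v := PolytopeAdj X u.1 v.1
  symm := ⟨by
    rintro u v ⟨hu, hv, hne, f, c, h1, h2⟩
    exact ⟨hv, hu, hne.symm, f, c, h1, by rw [h2, segment_symm]⟩⟩
  loopless := ⟨by rintro u ⟨_, _, hne, _⟩; exact hne rfl⟩

/-- The vertex set of the hyper-simplex `Δ(d, ρ)`: all 0/1-vectors in `ℝ^d` with
exactly `ρ` coordinates equal to one. -/
def hypersimplexVerts (d ρ : ℕ) : Finset (Fin d → ℝ) :=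
  ((Finset.univ : Finset (Fin d → Bool)).filter
      (fun b => (Finset.univ.filter (fun i => b i = true)).card = ρ)).image
    (fun b i => if b i then (1 : ℝ) else 0)

/-! The vertices of `Δ(d, ρ)` are the indicator vectors of the `ρ`-subsets of `Fin d`, and two of
them span an edge as soon as they differ by exchanging one element (the functional
`x ↦ ∑_{A} x + ∑_{B} x` is maximised exactly at `A` and `B`). Let `𝒮` be a family of at most half
of the `ρ`-subsets. Since permutations act transitively on `ρ`-subsets, a uniformly random
permutation moves a fixed `A ∈ 𝒮` out of `𝒮` with probability at least `1/2`; so the number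
`exitCount 𝒮 π` of members of `𝒮` that `π` moves out of `𝒮`, summed over all `π`, is at least
`d! |𝒮| / 2`. This count is subadditive in `π`, and peeling off one transposition at a time
(`Perm (Fin (n+1)) ≃ Fin (n+1) × Perm (Fin n)`) bounds the same sum by `d!/4` times its sum over
all transpositions `swap i j`. The latter counts each exchange edge leaving `𝒮` twice, whence
`|δ(𝒮)| ≥ |𝒮|`. -/

open Finset Equiv
open scoped Pointwise

namespace MulAction

variable {G X : Type*} [Group G] [MulAction G X] [DecidableEq X]

def exitCount (𝒮 : Finset X) (g : G) : ℕ := #{x ∈ 𝒮 | g • x ∉ 𝒮}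

lemma exitCount_one (𝒮 : Finset X) : exitCount 𝒮 (1 : G) = 0 := by
  simp [exitCount]

lemma exitCount_mul_le (𝒮 : Finset X) (g h : G) :
    exitCount 𝒮 (g * h) ≤ exitCount 𝒮 g + exitCount 𝒮 h := by
  have hsub : {x ∈ 𝒮 | (g * h) • x ∉ 𝒮} ⊆
      {x ∈ 𝒮 | h • x ∈ 𝒮 ∧ g • h • x ∉ 𝒮} ∪ {x ∈ 𝒮 | h • x ∉ 𝒮} := by
    intro x
    simp only [mem_filter, mem_union, mul_smul]
    tauto
  have hmaps : #{x ∈ 𝒮 | h • x ∈ 𝒮 ∧ g • h • x ∉ 𝒮} ≤ exitCount 𝒮 g :=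
    card_le_card_of_injOn (h • ·) (fun x hx => by simp_all) (MulAction.injective h).injOn
  calc exitCount 𝒮 (g * h) ≤ _ := card_le_card hsub
    _ ≤ _ := card_union_le _ _
    _ ≤ exitCount 𝒮 g + exitCount 𝒮 h := Nat.add_le_add hmaps le_rfl

variable [Fintype G] [Fintype X] [IsPretransitive G X]

lemma card_mul_card_filter_smul_eq (x y : X) :
    Fintype.card X * #{g : G | g • x = y} = Fintype.card G := by
  have hfiber (y' : X) : #{g : G | g • x = y'} = #{g : G | g • x = y} := by
    obtain ⟨h, rfl⟩ := exists_smul_eq G y y'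
    refine card_nbij' (h⁻¹ * ·) (h * ·) ?_ ?_ ?_ ?_ <;> intro g <;> simp_all [mul_smul]
  calc Fintype.card X * #{g : G | g • x = y} = ∑ y' : X, #{g : G | g • x = y'} := by
        simp [hfiber]
    _ = Fintype.card G := by
        simpa using (card_eq_sum_card_fiberwise (s := univ) (t := univ) (f := (· • x))
          (by simp)).symm

lemma card_mul_card_filter_smul_mem (x : X) (𝒯 : Finset X) :
    Fintype.card X * #{g : G | g • x ∈ 𝒯} = Fintype.card G * #𝒯 := by
  rw [← sum_card_fiberwise_eq_card_filter, mul_sum]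
  simp [card_mul_card_filter_smul_eq, mul_comm]

theorem card_mul_sum_exitCount (𝒮 : Finset X) :
    Fintype.card X * ∑ g : G, exitCount 𝒮 g = Fintype.card G * (#𝒮 * #𝒮ᶜ) := by
  have hswap : ∑ g : G, exitCount 𝒮 g = ∑ x ∈ 𝒮, #{g : G | g • x ∈ 𝒮ᶜ} := by
    simp only [exitCount, card_filter, mem_compl]
    exact sum_comm
  rw [hswap, mul_sum]
  simp only [card_mul_card_filter_smul_mem, sum_const, smul_eq_mul]
  ring

end MulAction

namespace Equiv.Perm

lemma decomposeFin_symm_eq_swap_mul {n : ℕ} (p : Fin (n + 1)) (σ : Perm (Fin n)) :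
    decomposeFin.symm (p, σ) = swap 0 p * decomposeFin.symm (0, σ) := by
  ext x
  cases x using Fin.cases <;> simp

lemma decomposeFin_symm_zero_mul {n : ℕ} (σ τ : Perm (Fin n)) :
    decomposeFin.symm (0, σ * τ) = decomposeFin.symm (0, σ) * decomposeFin.symm (0, τ) := by
  ext x
  cases x using Fin.cases <;> simp

lemma decomposeFin_symm_zero_swap {n : ℕ} (i j : Fin n) :
    decomposeFin.symm (0, swap i j) = swap i.succ j.succ := by
  ext x
  cases x using Fin.cases with
  | zero => simp [swap_apply_of_ne_of_ne (Fin.succ_ne_zero i).symm (Fin.succ_ne_zero j).symm]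
  | succ x => simp [(Fin.succ_injective n).swap_apply]

section Subadditive

variable {n : ℕ} (f : Perm (Fin (n + 1)) → ℕ)

lemma sum_perm_succ_le_of_subadditive (h1 : f 1 = 0) (hmul : ∀ σ τ, f (σ * τ) ≤ f σ + f τ) :
    ∑ π, f π ≤ n.factorial * ∑ j : Fin n, f (swap 0 j.succ) +
      (n + 1) * ∑ σ : Perm (Fin n), f (decomposeFin.symm (0, σ)) := by
  have hrefl : f (Equiv.refl _) = 0 := h1
  calc ∑ π, f π = ∑ q : Fin (n + 1) × Perm (Fin n), f (decomposeFin.symm q) :=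
        (Equiv.sum_comp decomposeFin.symm f).symm
    _ ≤ ∑ q : Fin (n + 1) × Perm (Fin n), (f (swap 0 q.1) + f (decomposeFin.symm (0, q.2))) := by
        gcongr with q
        rw [decomposeFin_symm_eq_swap_mul]
        exact hmul _ _
    _ = _ := by
        simp [sum_add_distrib, Fintype.sum_prod_type, mul_sum, Fin.sum_univ_succ, hrefl,
          Fintype.card_perm]

lemma sum_sum_swap_fin_succ (h1 : f 1 = 0) :
    ∑ i, ∑ j, f (swap i j) =
      2 * ∑ j : Fin n, f (swap 0 j.succ) + ∑ i : Fin n, ∑ j : Fin n, f (swap i.succ j.succ) := by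
  -- `simp` normalises `swap i i` to `Equiv.refl _` rather than to `1`
  have hrefl : f (Equiv.refl _) = 0 := h1
  simp only [Fin.sum_univ_succ, swap_comm _ (0 : Fin (n + 1)), sum_add_distrib, swap_self, hrefl,
    zero_add]
  ring

end Subadditive

theorem four_mul_sum_le_factorial_mul_sum_swap {n : ℕ} (f : Perm (Fin n) → ℕ) (h1 : f 1 = 0)
    (hmul : ∀ σ τ, f (σ * τ) ≤ f σ + f τ) :
    4 * ∑ σ, f σ ≤ n.factorial * ∑ i, ∑ j, f (swap i j) := by
  induction n with
  | zero => simp [Subsingleton.elim _ (1 : Perm (Fin 0)), h1]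
  | succ n ih =>
    have hL := ih (fun σ => f (decomposeFin.symm (0, σ)))
      (by rw [decomposeFin_symm_of_one, swap_self]; exact h1) fun σ τ => by
      simpa only [decomposeFin_symm_zero_mul] using hmul _ _
    simp only [decomposeFin_symm_zero_swap] at hL
    have hsplit := sum_perm_succ_le_of_subadditive f h1 hmul
    set a := ∑ j : Fin n, f (swap 0 j.succ)
    have ha : 4 * n.factorial * a ≤ 2 * (n + 1) * n.factorial * a := by
      rcases n with _ | n
      · simp [a]
      · gcongr; omega
    calc 4 * ∑ π, f π ≤ 4 * n.factorial * a +
          (n + 1) * (4 * ∑ σ : Perm (Fin n), f (decomposeFin.symm (0, σ))) := by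
          linarith
      _ ≤ 2 * (n + 1) * n.factorial * a +
          (n + 1) * (n.factorial * ∑ i : Fin n, ∑ j : Fin n, f (swap i.succ j.succ)) := by gcongr
      _ = _ := by rw [sum_sum_swap_fin_succ f h1, Nat.factorial_succ]; ring

end Equiv.Perm

lemma sum_sum_eq_two_nsmul_sum_sum_compl {α M : Type*} [Fintype α] [DecidableEq α]
    [AddCommMonoid M] (A : Finset α) (g : α → α → M) (hsymm : ∀ i j, g i j = g j i)
    (hzero : ∀ i j, (i ∈ A ↔ j ∈ A) → g i j = 0) :
    ∑ i, ∑ j, g i j = 2 • ∑ i ∈ A, ∑ j ∈ Aᶜ, g i j := by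
  have hrow (i : α) : ∑ j, g i j = ∑ j ∈ A, g i j + ∑ j ∈ Aᶜ, g i j :=
    (sum_add_sum_compl A _).symm
  have hin : ∑ i ∈ A, ∑ j ∈ A, g i j = 0 :=
    sum_eq_zero fun i hi => sum_eq_zero fun j hj => hzero i j (iff_of_true hi hj)
  have hout : ∑ i ∈ Aᶜ, ∑ j ∈ Aᶜ, g i j = 0 :=
    sum_eq_zero fun i hi => sum_eq_zero fun j hj =>
      hzero i j (iff_of_false (mem_compl.mp hi) (mem_compl.mp hj))
  rw [← sum_add_sum_compl A, two_nsmul]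
  simp only [hrow, sum_add_distrib, hin, hout, zero_add, add_zero]
  rw [sum_comm (s := Aᶜ)]
  simp only [hsymm _ _]

section Exchange

variable {α : Type*} [DecidableEq α] {A : Finset α} {i j : α}

lemma swap_smul_finset_of_mem_of_notMem (hi : i ∈ A) (hj : j ∉ A) :
    swap i j • A = insert j (A.erase i) := by
  rw [← coe_inj, coe_smul_finset, ← Set.image_smul]
  simp only [Perm.smul_def]
  rw [image_swap_of_mem_of_notMem hi hj, coe_insert, coe_erase,
    Set.insert_sdiff_singleton_comm (ne_of_mem_of_not_mem hi hj).symm]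

lemma swap_smul_finset_eq_self (h : i ∈ A ↔ j ∈ A) : swap i j • A = A := by
  ext x
  simp only [mem_smul_finset, Perm.smul_def]
  constructor
  · rintro ⟨y, hy, rfl⟩
    rw [swap_apply_def]; split_ifs <;> grind
  · intro hx
    exact ⟨swap i j x, by rw [swap_apply_def]; split_ifs <;> grind, swap_apply_self i j x⟩

lemma insert_erase_sdiff_self (hj : j ∉ A) : insert j (A.erase i) \ A = {j} := by
  ext x; simp only [mem_sdiff, mem_insert, mem_erase, mem_singleton]; grind

lemma sdiff_insert_erase (hi : i ∈ A) (hj : j ∉ A) : A \ insert j (A.erase i) = {i} := by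
  ext x; simp only [mem_sdiff, mem_insert, mem_erase, mem_singleton]; grind

lemma card_inter_add_card_inter_insert_erase (hj : j ∉ A) (C : Finset α) :
    #(C ∩ A) + #(C ∩ insert j (A.erase i)) = #(C ∩ insert j A) + #(C ∩ A.erase i) := by
  have hunion : C ∩ A ∪ C ∩ insert j (A.erase i) = C ∩ insert j A := by
    ext x; simp only [mem_union, mem_inter, mem_insert, mem_erase]; tauto
  have hinter : C ∩ A ∩ (C ∩ insert j (A.erase i)) = C ∩ A.erase i := by
    ext x; simp only [mem_inter, mem_insert, mem_erase]; grind
  rw [← card_union_add_card_inter, hunion, hinter]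

lemma card_inter_add_card_inter_insert_erase_lt (hi : i ∈ A) (hj : j ∉ A) {C : Finset α}
    (hC : #C = #A) : #(C ∩ A) + #(C ∩ insert j (A.erase i)) < 2 * #A := by
  have h1 : #(C ∩ insert j A) ≤ #C := card_le_card inter_subset_left
  have h2 : #(C ∩ A.erase i) ≤ #(A.erase i) := card_le_card inter_subset_right
  have h3 := card_erase_add_one hi
  rw [card_inter_add_card_inter_insert_erase hj]
  omega

lemma card_inter_add_card_inter_insert_erase_eq_iff (hi : i ∈ A) (hj : j ∉ A) {C : Finset α}
    (hC : #C = #A) :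
    #(C ∩ A) + #(C ∩ insert j (A.erase i)) + 1 = 2 * #A ↔ C = A ∨ C = insert j (A.erase i) := by
  have hE := card_erase_add_one hi
  have hB : #(insert j (A.erase i)) = #A := by
    rw [card_insert_of_notMem fun h => hj (mem_of_mem_erase h), hE]
  rw [card_inter_add_card_inter_insert_erase hj]
  constructor
  · intro h
    have hCA : C ⊆ insert j A := inter_eq_left.mp <| eq_of_subset_of_card_le inter_subset_left (by
      have := card_le_card (inter_subset_right (s₁ := C) (s₂ := A.erase i)); omega)
    have hEC : A.erase i ⊆ C := inter_eq_right.mp <| eq_of_subset_of_card_le inter_subset_right (by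
      have := card_le_card (inter_subset_left (s₁ := C) (s₂ := insert j A)); omega)
    by_cases hjC : j ∈ C
    · exact Or.inr (eq_of_subset_of_card_le (insert_subset hjC hEC) (by omega)).symm
    · refine Or.inl (eq_of_subset_of_card_le (fun x hx => ?_) (by omega))
      rcases mem_insert.mp (hCA hx) with rfl | h
      · exact absurd hx hjC
      · exact h
  · rintro (rfl | rfl)
    · rw [inter_eq_left.mpr (subset_insert j C), inter_eq_right.mpr (erase_subset i C)]
      omega
    · rw [inter_eq_left.mpr (insert_subset_insert j (erase_subset i A)),
        inter_eq_right.mpr (subset_insert j (A.erase i)), hB]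
      omega

end Exchange

section ExchangeBoundary

variable {α : Type*} [Fintype α] [DecidableEq α] {ρ : ℕ} {𝒮 : Finset (Set.powersetCard α ρ)}

def exchangeBoundary (𝒮 : Finset (Set.powersetCard α ρ)) :
    Finset (Σ _ : Set.powersetCard α ρ, α × α) :=
  𝒮.sigma fun A => {p ∈ (A : Finset α) ×ˢ (A : Finset α)ᶜ | swap p.1 p.2 • A ∉ 𝒮}

lemma mem_exchangeBoundary {q : Σ _ : Set.powersetCard α ρ, α × α} :
    q ∈ exchangeBoundary 𝒮 ↔ q.1 ∈ 𝒮 ∧ q.2.1 ∈ (q.1 : Finset α) ∧ q.2.2 ∉ (q.1 : Finset α) ∧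
      swap q.2.1 q.2.2 • q.1 ∉ 𝒮 := by
  simp [exchangeBoundary, and_assoc]

lemma coe_swap_smul_of_mem_exchangeBoundary {q : Σ _ : Set.powersetCard α ρ, α × α}
    (hq : q ∈ exchangeBoundary 𝒮) :
    ((swap q.2.1 q.2.2 • q.1 : Set.powersetCard α ρ) : Finset α) =
      insert q.2.2 ((q.1 : Finset α).erase q.2.1) := by
  obtain ⟨-, hi, hj, -⟩ := mem_exchangeBoundary.mp hq
  rw [Set.powersetCard.coe_smul, swap_smul_finset_of_mem_of_notMem hi hj]

lemma injOn_exchangeBoundary :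
    Set.InjOn (fun q : Σ _ : Set.powersetCard α ρ, α × α => (q.1, swap q.2.1 q.2.2 • q.1))
      (exchangeBoundary 𝒮 : Set (Σ _ : Set.powersetCard α ρ, α × α)) := by
  rintro ⟨A, i, j⟩ hq ⟨A', i', j'⟩ hq' heq
  obtain ⟨rfl, hB⟩ := Prod.mk.inj heq
  have hB' := congrArg Subtype.val hB
  rw [coe_swap_smul_of_mem_exchangeBoundary hq, coe_swap_smul_of_mem_exchangeBoundary hq'] at hB'
  obtain ⟨-, hi, hj, -⟩ := mem_exchangeBoundary.mp hq
  obtain ⟨-, hi', hj', -⟩ := mem_exchangeBoundary.mp hq'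
  have hjj := insert_erase_sdiff_self (i := i) hj
  rw [hB', insert_erase_sdiff_self hj'] at hjj
  have hii := sdiff_insert_erase hi hj
  rw [hB', sdiff_insert_erase hi' hj'] at hii
  obtain rfl : j' = j := singleton_inj.mp hjj
  obtain rfl : i' = i := singleton_inj.mp hii
  rfl

lemma sum_sum_exitCount_swap (𝒮 : Finset (Set.powersetCard α ρ)) :
    ∑ i : α, ∑ j : α, MulAction.exitCount 𝒮 (swap i j) = 2 * #(exchangeBoundary 𝒮) := by
  have hrow (A : Set.powersetCard α ρ) (hA : A ∈ 𝒮) :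
      ∑ i : α, ∑ j : α, (if swap i j • A ∉ 𝒮 then 1 else 0) =
        2 * #{p ∈ (A : Finset α) ×ˢ (A : Finset α)ᶜ | swap p.1 p.2 • A ∉ 𝒮} := by
    rw [sum_sum_eq_two_nsmul_sum_sum_compl (A : Finset α), smul_eq_mul, card_filter, sum_product]
    · intro i j
      rw [swap_comm]
    · intro i j hij
      have hfix : swap i j • A = A :=
        Subtype.ext (by rw [Set.powersetCard.coe_smul, swap_smul_finset_eq_self hij])
      simp [hfix, hA]
  calc ∑ i : α, ∑ j : α, MulAction.exitCount 𝒮 (swap i j)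
      = ∑ i : α, ∑ j : α, ∑ A ∈ 𝒮, (if swap i j • A ∉ 𝒮 then 1 else 0) := by
        simp only [MulAction.exitCount, card_filter]
    _ = ∑ A ∈ 𝒮, ∑ i : α, ∑ j : α, (if swap i j • A ∉ 𝒮 then 1 else 0) :=
        (sum_congr rfl fun _ _ => sum_comm).trans sum_comm
    _ = 2 * #(exchangeBoundary 𝒮) := by
        rw [exchangeBoundary, card_sigma, mul_sum]
        exact sum_congr rfl hrow

end ExchangeBoundary

theorem card_le_card_exchangeBoundary {d ρ : ℕ} (𝒮 : Finset (Set.powersetCard (Fin d) ρ))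
    (h𝒮 : 2 * #𝒮 ≤ Fintype.card (Set.powersetCard (Fin d) ρ)) :
    #𝒮 ≤ #(exchangeBoundary 𝒮) := by
  have := Set.powersetCard.isPretransitive (α := Fin d) (n := ρ)
  have hcount := MulAction.card_mul_sum_exitCount (G := Perm (Fin d)) 𝒮
  have havg := Perm.four_mul_sum_le_factorial_mul_sum_swap (n := d) (MulAction.exitCount 𝒮)
    (MulAction.exitCount_one 𝒮) (MulAction.exitCount_mul_le 𝒮)
  rw [sum_sum_exitCount_swap] at havg
  rw [Fintype.card_perm, Fintype.card_fin, card_compl] at hcount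
  set N := Fintype.card (Set.powersetCard (Fin d) ρ)
  rcases Nat.eq_zero_or_pos #𝒮 with h0 | hpos
  · omega
  have hN : 0 < N * d.factorial := Nat.mul_pos (by omega) d.factorial_pos
  have hhalf : N ≤ (N - #𝒮) * 2 := by omega
  refine Nat.le_of_mul_le_mul_left ?_ hN
  calc N * d.factorial * #𝒮 ≤ d.factorial * (#𝒮 * (N - #𝒮)) * 2 := by
        nlinarith [Nat.mul_le_mul_left (d.factorial * #𝒮) hhalf]
    _ = 2 * (N * ∑ σ, MulAction.exitCount 𝒮 σ) := by rw [hcount]; ring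
    _ ≤ N * d.factorial * #(exchangeBoundary 𝒮) := by nlinarith

lemma sep_convexHull_eq_convexHull_sep {E : Type*} [AddCommGroup E] [Module ℝ E] (X : Finset E)
    (f : E →ₗ[ℝ] ℝ) {c : ℝ} (hle : ∀ x ∈ X, f x ≤ c) :
    {x ∈ convexHull ℝ (X : Set E) | f x = c} = convexHull ℝ {x ∈ (X : Set E) | f x = c} := by
  apply subset_antisymm
  · rintro x ⟨hx, hfx⟩
    obtain ⟨w, hw0, hw1, rfl⟩ := Finset.mem_convexHull.mp hx
    have hface : ∀ y ∈ X, w y ≠ 0 → f y = c := by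
      have hsum : ∑ y ∈ X, w y * (c - f y) = 0 := by
        rw [Finset.centerMass_eq_of_sum_1 _ _ hw1, map_sum] at hfx
        simp only [id, map_smul, smul_eq_mul] at hfx
        simp [mul_sub, Finset.sum_sub_distrib, ← Finset.sum_mul, hw1, hfx]
      intro y hy hwy
      have := (Finset.sum_eq_zero_iff_of_nonneg fun z hz =>
        mul_nonneg (hw0 z hz) (sub_nonneg.mpr (hle z hz))).mp hsum y hy
      linarith [(mul_eq_zero.mp this).resolve_left hwy]
    rw [← Finset.centerMass_filter_ne_zero]
    refine Finset.centerMass_mem_convexHull _ (fun y hy => hw0 y (mem_filter.mp hy).1) ?_ ?_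
    · rw [Finset.sum_filter_ne_zero, hw1]; exact one_pos
    · intro y hy
      obtain ⟨hyX, hwy⟩ := mem_filter.mp hy
      exact ⟨hyX, hface y hyX hwy⟩
  · refine convexHull_min (fun x hx => ⟨subset_convexHull ℝ _ hx.1, hx.2⟩) ?_
    exact (convex_convexHull ℝ _).inter (convex_hyperplane f.isLinear c)

lemma polytopeAdj_of_face {ι : Type*} [Fintype ι] {X : Finset (ι → ℝ)} {u v : ι → ℝ}
    (huv : u ≠ v) (f : (ι → ℝ) →ₗ[ℝ] ℝ) (c : ℝ) (hle : ∀ x ∈ X, f x ≤ c)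
    (hface : {x ∈ (X : Set (ι → ℝ)) | f x = c} = {u, v}) : PolytopeAdj X u v := by
  have hmem : ∀ y ∈ ({u, v} : Set (ι → ℝ)), y ∈ X := fun y hy => by
    rw [← hface] at hy; exact hy.1
  refine ⟨hmem u (by simp), hmem v (by simp), huv, f, c, fun x hx => ?_, ?_⟩
  · exact convexHull_min (fun y hy => hle y hy) (convex_halfSpace_le f.isLinear c) hx
  · rw [sep_convexHull_eq_convexHull_sep X f hle, hface, convexHull_pair]

section CharVec

variable {ι : Type*} [DecidableEq ι]

def charVec (A : Finset ι) : ι → ℝ := fun i => if i ∈ A then 1 else 0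

lemma charVec_injective : Function.Injective (charVec (ι := ι)) := by
  intro A B h
  ext i
  have := congrFun h i
  by_cases hA : i ∈ A <;> by_cases hB : i ∈ B <;> simp_all [charVec]

lemma sum_charVec (A C : Finset ι) : ∑ k ∈ A, charVec C k = #(A ∩ C) := by
  simp [charVec]

end CharVec

lemma mem_hypersimplexVerts {d ρ : ℕ} {x : Fin d → ℝ} :
    x ∈ hypersimplexVerts d ρ ↔ ∃ A : Finset (Fin d), #A = ρ ∧ charVec A = x := by
  constructor
  · intro hx
    obtain ⟨b, hb, rfl⟩ := Finset.mem_image.mp hx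
    refine ⟨({i | b i = true} : Finset (Fin d)), (mem_filter.mp hb).2, ?_⟩
    funext i
    simp [charVec]
  · rintro ⟨A, rfl, rfl⟩
    refine Finset.mem_image.mpr ⟨fun i => decide (i ∈ A), by simp, ?_⟩
    funext i
    simp [charVec]

theorem polytopeAdj_hypersimplexVerts_insert_erase {d ρ : ℕ} {A : Finset (Fin d)} {i j : Fin d}
    (hA : #A = ρ) (hi : i ∈ A) (hj : j ∉ A) :
    PolytopeAdj (hypersimplexVerts d ρ) (charVec A) (charVec (insert j (A.erase i))) := by
  subst hA
  set B := insert j (A.erase i)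
  set f : (Fin d → ℝ) →ₗ[ℝ] ℝ := ∑ k ∈ A, LinearMap.proj k + ∑ k ∈ B, LinearMap.proj k
  have hf (C : Finset (Fin d)) : f (charVec C) = ((#(C ∩ A) + #(C ∩ B) : ℕ) : ℝ) := by
    simp [f, sum_charVec, inter_comm C]
  have hB : #B = #A := by
    rw [card_insert_of_notMem fun h => hj (mem_of_mem_erase h), card_erase_add_one hi]
  have hAB : A ≠ B := fun h => hj (h ▸ mem_insert_self j _)
  refine polytopeAdj_of_face (charVec_injective.ne hAB) f (2 * #A - 1) ?_ ?_
  · intro x hx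
    obtain ⟨C, hC, rfl⟩ := mem_hypersimplexVerts.mp hx
    rw [hf, le_sub_iff_add_le]
    exact_mod_cast card_inter_add_card_inter_insert_erase_lt hi hj hC
  · have hmax {C : Finset (Fin d)} (hC : #C = #A) :
        f (charVec C) = 2 * #A - 1 ↔ C = A ∨ C = B := by
      rw [hf, eq_sub_iff_add_eq, ← card_inter_add_card_inter_insert_erase_eq_iff hi hj hC]
      norm_cast
    ext x
    simp only [Set.mem_ofPred_eq, Finset.mem_coe, Set.mem_insert_iff, Set.mem_singleton_iff]
    constructor
    · rintro ⟨hx, hfx⟩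
      obtain ⟨C, hC, rfl⟩ := mem_hypersimplexVerts.mp hx
      rcases (hmax hC).mp hfx with rfl | rfl
      exacts [Or.inl rfl, Or.inr rfl]
    · rintro (rfl | rfl)
      · exact ⟨mem_hypersimplexVerts.mpr ⟨A, rfl, rfl⟩, (hmax rfl).mpr (Or.inl rfl)⟩
      · exact ⟨mem_hypersimplexVerts.mpr ⟨B, hB, rfl⟩, (hmax hB).mpr (Or.inr rfl)⟩

def hypersimplexVertexEquiv (d ρ : ℕ) :
    Set.powersetCard (Fin d) ρ ≃ {x // x ∈ hypersimplexVerts d ρ} :=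
  Equiv.ofBijective
    (fun A => ⟨charVec A, mem_hypersimplexVerts.mpr ⟨A, Set.powersetCard.card_eq A, rfl⟩⟩)
    ⟨fun A B h => Subtype.ext (charVec_injective (congrArg Subtype.val h)), fun x => by
      obtain ⟨A, hA, hx⟩ := mem_hypersimplexVerts.mp x.2
      exact ⟨Set.powersetCard.ofCard hA, Subtype.ext hx⟩⟩

theorem card_exchangeBoundary_le_cutCard {d ρ : ℕ} (S : Set {x // x ∈ hypersimplexVerts d ρ}) :
    #(exchangeBoundary (hypersimplexVertexEquiv d ρ ⁻¹' S).toFinset) ≤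
      cutCard (polytopeGraph (hypersimplexVerts d ρ)) S := by
  set e := hypersimplexVertexEquiv d ρ
  rw [← Set.ncard_coe_finset]
  refine Set.ncard_le_ncard_of_injOn (fun q => (e q.1, e (swap q.2.1 q.2.2 • q.1)))
    (fun q hq => ?_) (fun q hq q' hq' h => injOn_exchangeBoundary hq hq' <|
      Prod.ext (e.injective (congrArg Prod.fst h)) (e.injective (congrArg Prod.snd h)))
    (Set.toFinite _)
  obtain ⟨hA, hi, hj, hB⟩ := mem_exchangeBoundary.mp hq
  refine ⟨by simpa using hA, by simpa using hB, ?_⟩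
  show PolytopeAdj _ (charVec _) (charVec _)
  rw [coe_swap_smul_of_mem_exchangeBoundary hq]
  exact polytopeAdj_hypersimplexVerts_insert_erase (Set.powersetCard.card_eq _) hi hj

theorem ncard_le_cutCard_hypersimplex {d ρ : ℕ} (S : Set {x // x ∈ hypersimplexVerts d ρ})
    (hS : 2 * S.ncard ≤ Fintype.card {x // x ∈ hypersimplexVerts d ρ}) :
    S.ncard ≤ cutCard (polytopeGraph (hypersimplexVerts d ρ)) S := by
  set e := hypersimplexVertexEquiv d ρ
  have hcard : #(e ⁻¹' S).toFinset = S.ncard := by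
    rw [← Set.ncard_eq_toFinset_card',
      Set.ncard_preimage_of_injective_subset_range e.injective (by simp)]
  calc S.ncard = #(e ⁻¹' S).toFinset := hcard.symm
    _ ≤ #(exchangeBoundary (e ⁻¹' S).toFinset) :=
        card_le_card_exchangeBoundary _ (by rwa [hcard, Fintype.card_congr e])
    _ ≤ cutCard (polytopeGraph (hypersimplexVerts d ρ)) S := card_exchangeBoundary_le_cutCard S

lemma Nat.two_le_choose {n k : ℕ} (hk1 : 1 ≤ k) (hkn : k ≤ n - 1) : 2 ≤ n.choose k := by
  obtain ⟨m, rfl⟩ : ∃ m, n = m + 1 := ⟨n - 1, by omega⟩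
  obtain ⟨l, rfl⟩ : ∃ l, k = l + 1 := ⟨k - 1, by omega⟩
  rw [Nat.choose_succ_succ']
  have := Nat.choose_pos (n := m) (k := l) (by omega)
  have := Nat.choose_pos (n := m) (k := l + 1) (by omega)
  omega

theorem expansion_of_hypersimplex_general (d ρ : ℕ) (hρ1 : 1 ≤ ρ) (hρ2 : ρ ≤ d - 1) :
    1 ≤ edgeExpansion (polytopeGraph (hypersimplexVerts d ρ)) := by
  have hV : 2 ≤ Fintype.card {x // x ∈ hypersimplexVerts d ρ} := by
    rw [← Fintype.card_congr (hypersimplexVertexEquiv d ρ), Fintype.card_eq_nat_card,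
      Set.powersetCard.card, Nat.card_eq_fintype_card, Fintype.card_fin]
    exact Nat.two_le_choose hρ1 hρ2
  obtain ⟨v⟩ : Nonempty {x // x ∈ hypersimplexVerts d ρ} := Fintype.card_pos_iff.mp (by omega)
  refine le_csInf ⟨_, {v}, Set.singleton_nonempty v, by simpa using hV, rfl⟩ ?_
  rintro r ⟨S, hSne, hS, rfl⟩
  rw [le_div_iff₀ (by exact_mod_cast (Set.ncard_pos (Set.toFinite S)).mpr hSne), one_mul]
  exact_mod_cast ncard_le_cutCard_hypersimplex S hS

/-- For every `d ≥ 2` and every `ρ` with `1 ≤ ρ ≤ d − 1`, the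
hyper-simplex `Δ(d, ρ) = conv{v ∈ {0,1}^d : Σᵢ vᵢ = ρ}` satisfies
`h(G(Δ(d, ρ))) ≥ 1`. -/
theorem expansion_of_hypersimplex (d ρ : ℕ) (hd : 2 ≤ d) (hρ1 : 1 ≤ ρ)
    (hρ2 : ρ ≤ d - 1) :
    1 ≤ edgeExpansion (polytopeGraph (hypersimplexVerts d ρ)) :=
  expansion_of_hypersimplex_general d ρ hρ1 hρ2
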